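/- Bridge edges carry the entire dipole current and induce no current elsewhere. Let V be a finite type, K : V → V → ℝ a symmetric nonnegative weight function with zero diagonal whose support graph G is connected, and let a ≠ b be adjacent vertices (K a b > 0) such that the edge {a,b} is a bridge of G, i.e., deleting the edge {a,b} from G disconnects a from b. Let I be a real number and suppose x : V → ℝ satisfies L(K) *ᵥ x = I · (e_b − e_a). Then for every pair of adjacent vertices i, j with {i,j} ≠ {a,b}, we have x i = x j (zero current across every other edge), and the full current flows through the bridge: K a b · (x b − x a) = I. -/

import Mathlib

open Matrix

/-- The weighted Laplacian matrix of a weight function `K`: diagonal entries are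
`∑ k, K i k`, off-diagonal entries are `-K i j`. -/
def weightedLaplacian {V : Type*} [Fintype V] [DecidableEq V] (K : V → V → ℝ) :
    Matrix V V ℝ :=
  Matrix.of fun i j => if i = j then ∑ k, K i k else -K i j

/-- The support graph of a weight function `K`: `i` and `j` are adjacent iff `i ≠ j`
and `K i j > 0` (for symmetric `K`). -/
def supportGraph {V : Type*} (K : V → V → ℝ) : SimpleGraph V :=
  SimpleGraph.fromRel fun i j => 0 < K i j

/-! Let `T` be the set of vertices still reachable from `a` once the bridge is deleted.
Summing `L x = I (e_b - e_a)` over `T` gives the net current leaving `T`; the bridge is the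
only edge leaving `T`, so `K a b (x b - x a) = I`. The energy `x ⬝ L x = ½ ∑ K i j (x i - x j)²`
then equals `I (x b - x a) = K a b (x b - x a)²`, which is exactly the bridge's share of the
sum, so every other edge carries no current. -/

open Finset

lemma supportGraph_adj {V : Type*} {K : V → V → ℝ} (hsymm : ∀ i j, K i j = K j i)
    {i j : V} :
    (supportGraph K).Adj i j ↔ i ≠ j ∧ 0 < K i j := by
  rw [supportGraph, SimpleGraph.fromRel_adj, hsymm j i, or_self]

lemma SimpleGraph.IsBridge.eq_of_adj_of_reachable {V : Type*} {G : SimpleGraph V} {a b i j : V}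
    (hbridge : G.IsBridge s(a, b)) (hadj : G.Adj i j)
    (hi : (G.deleteEdges {s(a, b)}).Reachable a i)
    (hj : ¬ (G.deleteEdges {s(a, b)}).Reachable a j) : i = a ∧ j = b := by
  by_cases hij : s(i, j) = s(a, b)
  · rcases Sym2.eq_iff.mp hij with h | ⟨rfl, -⟩
    · exact h
    · exact absurd hi hbridge
  · exact absurd (hi.trans (SimpleGraph.Adj.reachable (by simpa [hadj] using hij))) hj

section

variable {V : Type*} [Fintype V] [DecidableEq V] {K : V → V → ℝ}

lemma weightedLaplacian_mulVec_apply (hdiag : ∀ i, K i i = 0) (x : V → ℝ) (i : V) :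
    (weightedLaplacian K *ᵥ x) i = ∑ j, K i j * (x i - x j) := by
  have hterm : ∀ j, (if i = j then ∑ k, K i k else -K i j) * x j
      = (if i = j then (∑ k, K i k) * x i else 0) - K i j * x j := by
    intro j
    split_ifs with h
    · subst h; simp [hdiag i]
    · ring
  simp only [mulVec, dotProduct, weightedLaplacian, of_apply, hterm, sum_sub_distrib,
    sum_ite_eq, mem_univ, if_true, mul_sub, sum_mul]

lemma sum_weightedLaplacian_mulVec_eq_sum_compl (hsymm : ∀ i j, K i j = K j i)
    (hdiag : ∀ i, K i i = 0) (T : Finset V) (x : V → ℝ) :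
    ∑ i ∈ T, (weightedLaplacian K *ᵥ x) i = ∑ i ∈ T, ∑ j ∈ Tᶜ, K i j * (x i - x j) := by
  have hinner : ∑ i ∈ T, ∑ j ∈ T, K i j * (x i - x j) = 0 := by
    have hswap : ∑ i ∈ T, ∑ j ∈ T, K i j * (x i - x j)
        = -∑ i ∈ T, ∑ j ∈ T, K i j * (x i - x j) := by
      conv_rhs => rw [sum_comm]
      simp only [← sum_neg_distrib]
      exact sum_congr rfl fun i _ => sum_congr rfl fun j _ => by rw [hsymm i j]; ring
    linarith
  simp only [weightedLaplacian_mulVec_apply hdiag, ← sum_add_sum_compl T, sum_add_distrib,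
    hinner, zero_add]

noncomputable def dirichletEnergy (K : V → V → ℝ) (x : V → ℝ) : ℝ :=
  (∑ i, ∑ j, K i j * (x i - x j) ^ 2) / 2

lemma dotProduct_weightedLaplacian_mulVec (hsymm : ∀ i j, K i j = K j i)
    (hdiag : ∀ i, K i i = 0) (x : V → ℝ) :
    x ⬝ᵥ (weightedLaplacian K *ᵥ x) = dirichletEnergy K x := by
  have hswap : ∑ i, ∑ j, x j * (K i j * (x j - x i))
      = ∑ i, ∑ j, x i * (K i j * (x i - x j)) := by
    rw [sum_comm]
    simp only [hsymm]
  have hsplit : ∑ i, ∑ j, K i j * (x i - x j) ^ 2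
      = ∑ i, ∑ j, x i * (K i j * (x i - x j)) + ∑ i, ∑ j, x j * (K i j * (x j - x i)) := by
    simp only [← sum_add_distrib]
    exact sum_congr rfl fun i _ => sum_congr rfl fun j _ => by ring
  simp only [dirichletEnergy, hsplit, hswap, dotProduct, weightedLaplacian_mulVec_apply hdiag,
    mul_sum]
  ring

lemma weight_mul_sq_sub_eq_zero_of_dirichletEnergy_eq (hsymm : ∀ i j, K i j = K j i)
    (hnonneg : ∀ i j, 0 ≤ K i j) {a b : V} (hab : a ≠ b) {x : V → ℝ}
    (hE : dirichletEnergy K x = K a b * (x b - x a) ^ 2) {i j : V} (hij : s(i, j) ≠ s(a, b)) :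
    K i j * (x i - x j) ^ 2 = 0 := by
  have hterm_nonneg : ∀ p : V × V, 0 ≤ K p.1 p.2 * (x p.1 - x p.2) ^ 2 :=
    fun p => mul_nonneg (hnonneg p.1 p.2) (sq_nonneg _)
  have hij' : (i, j) ∉ ({(a, b), (b, a)} : Finset (V × V)) := by
    simp only [mem_insert, mem_singleton, Prod.mk.injEq, not_or]
    exact ⟨fun h => hij (by rw [h.1, h.2]), fun h => hij (by rw [h.1, h.2, Sym2.eq_swap])⟩
  have hle := sum_le_sum_of_subset_of_nonneg (subset_univ (insert (i, j) {(a, b), (b, a)}))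
    fun p _ _ => hterm_nonneg p
  rw [sum_insert hij', sum_pair (fun h => hab (congrArg Prod.fst h)), Fintype.sum_prod_type,
    hsymm b a] at hle
  have hbound : K i j * (x i - x j) ^ 2 ≤ 0 := by
    rw [dirichletEnergy] at hE
    ring_nf at hle hE ⊢
    linarith
  exact le_antisymm hbound (hterm_nonneg (i, j))

lemma weight_mul_sub_eq_of_isBridge (hsymm : ∀ i j, K i j = K j i)
    (hnonneg : ∀ i j, 0 ≤ K i j) (hdiag : ∀ i, K i i = 0) {a b : V}
    (hbridge : (supportGraph K).IsBridge s(a, b)) {I : ℝ} {x : V → ℝ}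
    (hx : weightedLaplacian K *ᵥ x = I • (Pi.single b 1 - Pi.single a 1)) :
    K a b * (x b - x a) = I := by
  classical
  set T := univ.filter (((supportGraph K).deleteEdges {s(a, b)}).Reachable a)
  have haT : a ∈ T := by simp [T]
  have hbT : b ∈ Tᶜ := by simpa [T] using SimpleGraph.isBridge_iff.mp hbridge
  have hcross : ∀ p ∈ T ×ˢ Tᶜ, p ≠ (a, b) → K p.1 p.2 * (x p.1 - x p.2) = 0 := by
    rintro ⟨i, j⟩ hp hne
    obtain ⟨hi, hj⟩ : _ ∧ ¬ _ := by simpa [T] using hp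
    suffices K i j = 0 by simp [this]
    by_contra hK
    have hadj := (supportGraph_adj hsymm).mpr
      ⟨by rintro rfl; exact hj hi, (hnonneg i j).lt_of_ne' hK⟩
    obtain ⟨rfl, rfl⟩ := hbridge.eq_of_adj_of_reachable hadj hi hj
    exact hne rfl
  have hflux := sum_weightedLaplacian_mulVec_eq_sum_compl hsymm hdiag T x
  rw [hx, ← sum_product', sum_eq_single_of_mem (a, b) (mem_product.mpr ⟨haT, hbT⟩) hcross]
    at hflux
  simp only [Pi.smul_apply, Pi.sub_apply, smul_eq_mul, ← mul_sum, sum_sub_distrib,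
    sum_pi_single', haT, mem_compl.mp hbT, if_true, if_false] at hflux
  linear_combination hflux

end

theorem bridge_carries_full_dipole_current_general
    {V : Type*} [Fintype V] [DecidableEq V] (K : V → V → ℝ)
    (hsymm : ∀ i j, K i j = K j i) (hnonneg : ∀ i j, 0 ≤ K i j)
    (hdiag : ∀ i, K i i = 0)
    (a b : V) (hab : a ≠ b)
    (hbridge : (supportGraph K).IsBridge s(a, b))
    (I : ℝ) (x : V → ℝ)
    (hx : (weightedLaplacian K).mulVec x = I • (Pi.single b 1 - Pi.single a 1)) :
    (∀ i j : V, (supportGraph K).Adj i j → s(i, j) ≠ s(a, b) → x i = x j) ∧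
    K a b * (x b - x a) = I := by
  have hcurrent := weight_mul_sub_eq_of_isBridge hsymm hnonneg hdiag hbridge hx
  have henergy : dirichletEnergy K x = K a b * (x b - x a) ^ 2 := by
    rw [← dotProduct_weightedLaplacian_mulVec hsymm hdiag, hx, dotProduct_smul, dotProduct_sub,
      dotProduct_single_one, dotProduct_single_one, smul_eq_mul, ← hcurrent]
    ring
  refine ⟨fun i j hadj hij => ?_, hcurrent⟩
  have hK := ((supportGraph_adj hsymm).mp hadj).2
  have hzero := weight_mul_sq_sub_eq_zero_of_dirichletEnergy_eq hsymm hnonneg hab henergy hij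
  simpa [hK.ne', sub_eq_zero] using hzero

/-- Bridge edges carry the entire dipole current and induce no current elsewhere: if the
edge `{a,b}` is a bridge of the connected support graph and `L(K) x = I • (e_b - e_a)`,
then `x i = x j` across every other edge (zero current), and the full current flows
through the bridge: `K a b (x b - x a) = I`. -/
theorem bridge_carries_full_dipole_current
    {V : Type*} [Fintype V] [DecidableEq V] (K : V → V → ℝ)
    (hsymm : ∀ i j, K i j = K j i) (hnonneg : ∀ i j, 0 ≤ K i j)
    (hdiag : ∀ i, K i i = 0) (hconn : (supportGraph K).Connected)
    (a b : V) (hab : a ≠ b) (hKab : 0 < K a b)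
    (hbridge : (supportGraph K).IsBridge s(a, b))
    (I : ℝ) (x : V → ℝ)
    (hx : (weightedLaplacian K).mulVec x = I • (Pi.single b 1 - Pi.single a 1)) :
    (∀ i j : V, (supportGraph K).Adj i j → s(i, j) ≠ s(a, b) → x i = x j) ∧
    K a b * (x b - x a) = I :=
  bridge_carries_full_dipole_current_general K hsymm hnonneg hdiag a b hab hbridge I x hx
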